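/- arXiv:2103.05781 — 2 statements merged into one kernel-verified Lean document; each statement's English description precedes it below -/
import Mathlib

section
/- The number of spanning trees of the complete graph on p ≥ 1 labeled vertices is p^{p-2}. -/
/-!
Root a tree at a vertex `z` and record it by its parent map, which fixes `z` and sends every other
vertex to its neighbour on the way to `z`; a self-map arises in this way exactly when it fixes `z`
and all its orbits reach `z`. Such maps are counted by Prüfer's bijection: repeatedly delete the
least leaf and write down its parent. On the vertex set `insert r s` this produces exactly the
sequences of length `#s - 1` with entries in `insert r s`, so there are `(#s + 1) ^ (#s - 1)` trees.
-/

/-- `T` is a spanning tree of `G`. -/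
def IsSpanningTree {V : Type*} {G : SimpleGraph V} (T : G.Subgraph) : Prop :=
  T.IsSpanning ∧ T.spanningCoe.IsTree

open Function Finset SimpleGraph

section Iterate

variable {α : Type*} {f : α → α}

lemma eq_of_isPeriodicPt_of_iterate_eq {n k : ℕ} {v z : α} (hz : f z = z) (hn : 0 < n)
    (hv : IsPeriodicPt f n v) (hk : f^[k] v = z) : v = z :=
  calc v = f^[n * k] v := (hv.mul_const k).eq.symm
    _ = f^[n * k - k] (f^[k] v) := by
      rw [← iterate_add_apply, Nat.sub_add_cancel (Nat.le_mul_of_pos_left k hn)]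
    _ = z := by rw [hk, iterate_fixed hz]

lemma exists_iterate_eq_of_forall_lt {z : α} (μ : α → ℕ) (hμ : ∀ v ≠ z, μ (f v) < μ v)
    (v : α) : ∃ k, f^[k] v = z := by
  induction hn : μ v using Nat.strong_induction_on generalizing v with
  | _ n ih =>
    by_cases hv : v = z
    · exact ⟨0, hv⟩
    · obtain ⟨k, hk⟩ := ih _ (hn ▸ hμ v hv) (f v) rfl
      exact ⟨k + 1, hk⟩

lemma iterate_update_of_notMem_range [DecidableEq α] {ℓ v : α} (hℓ : ℓ ∉ Set.range f)
    (hv : v ≠ ℓ) (a : α) (k : ℕ) : (update f ℓ a)^[k] v = f^[k] v := by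
  induction k generalizing v with
  | zero => rfl
  | succ k ih =>
    rw [iterate_succ_apply, iterate_succ_apply, update_of_ne hv, ih fun h => hℓ ⟨v, h⟩]

end Iterate

section ParentGraph

variable {V : Type*} {f g : V → V} {z v w : V}

def IsParentMap (f : V → V) (z : V) : Prop := f z = z ∧ ∀ v, ∃ k, f^[k] v = z

/-- `fromRel` discards the loop at a fixed point, in particular at the root. -/
def parentGraph (f : V → V) : SimpleGraph V := fromRel fun v w => f v = w

namespace IsParentMap

lemma apply_ne_self (hf : IsParentMap f z) (hv : v ≠ z) : f v ≠ v := fun hfix =>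
  hv <| eq_of_isPeriodicPt_of_iterate_eq hf.1 one_pos hfix (hf.2 v).choose_spec

lemma apply_apply_ne_self (hf : IsParentMap f z) (hv : v ≠ z) : f (f v) ≠ v := fun hcyc =>
  hv <| eq_of_isPeriodicPt_of_iterate_eq hf.1 two_pos (hcyc : f^[2] v = v) (hf.2 v).choose_spec

end IsParentMap

lemma parentGraph_adj : (parentGraph f).Adj v w ↔ v ≠ w ∧ (f v = w ∨ f w = v) :=
  fromRel_adj _ _ _

lemma parentGraph_reachable_iterate (k : ℕ) : (parentGraph f).Reachable v (f^[k] v) := by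
  induction k with
  | zero => rfl
  | succ k ih =>
    refine ih.trans ?_
    rw [iterate_succ_apply']
    by_cases h : f^[k] v = f (f^[k] v)
    · rw [← h]
    · exact (parentGraph_adj.2 ⟨h, Or.inl rfl⟩).reachable

lemma edgeSet_parentGraph :
    (parentGraph f).edgeSet = (fun v => s(v, f v)) '' {v | f v ≠ v} := by
  ext e
  induction e using Sym2.ind with
  | _ a b =>
    simp only [mem_edgeSet, parentGraph_adj, Set.mem_image, Set.mem_ofPred_eq, Sym2.eq_iff]
    constructor
    · rintro ⟨hab, rfl | rfl⟩
      · exact ⟨a, Ne.symm hab, Or.inl ⟨rfl, rfl⟩⟩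
      · exact ⟨b, hab, Or.inr ⟨rfl, rfl⟩⟩
    · rintro ⟨c, hc, ⟨rfl, rfl⟩ | ⟨rfl, rfl⟩⟩
      · exact ⟨Ne.symm hc, Or.inl rfl⟩
      · exact ⟨hc, Or.inr rfl⟩

namespace IsParentMap

lemma parentGraph_connected (hf : IsParentMap f z) : (parentGraph f).Connected :=
  haveI : Nonempty V := ⟨z⟩
  .mk fun v w => by
    obtain ⟨k, hk⟩ := hf.2 v
    obtain ⟨m, hm⟩ := hf.2 w
    exact (hk ▸ parentGraph_reachable_iterate k).trans
      (hm ▸ parentGraph_reachable_iterate m).symm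

lemma card_edgeSet_parentGraph [Finite V] (hf : IsParentMap f z) :
    Nat.card (parentGraph f).edgeSet + 1 = Nat.card V := by
  have hmoved : {v | f v ≠ v} = {z}ᶜ := by
    ext v
    exact ⟨fun h hv => h (hv ▸ hf.1), hf.apply_ne_self⟩
  have hinj : Set.InjOn (fun v => s(v, f v)) {z}ᶜ := by
    intro v hv w _ hvw
    rcases Sym2.eq_iff.1 hvw with ⟨h, -⟩ | ⟨h, h'⟩
    · exact h
    · exact absurd (by rw [h', ← h]) (hf.apply_apply_ne_self hv)
  rw [Nat.card_coe_set_eq, edgeSet_parentGraph, hmoved, hinj.ncard_image,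
    ← Set.ncard_compl_add_ncard {z}, Set.ncard_singleton]

lemma parentGraph_isTree [Finite V] (hf : IsParentMap f z) : (parentGraph f).IsTree :=
  isTree_iff_connected_and_card.2 ⟨hf.parentGraph_connected, hf.card_edgeSet_parentGraph⟩

lemma eq_of_parentGraph_eq (hf : IsParentMap f z) (hg : IsParentMap g z)
    (hfg : parentGraph f = parentGraph g) : f = g := by
  -- a disagreement of `f` and `g` at `v` propagates to `f v`, but they agree at the root
  have step : ∀ v, f v ≠ g v → f (f v) ≠ g (f v) := by
    intro v hne hpar
    have hv : v ≠ z := fun h => hne (by rw [h, hf.1, hg.1])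
    have hadj : (parentGraph g).Adj v (f v) :=
      hfg ▸ parentGraph_adj.2 ⟨(hf.apply_ne_self hv).symm, Or.inl rfl⟩
    rcases (parentGraph_adj.1 hadj).2 with h | h
    · exact hne h.symm
    · exact hf.apply_apply_ne_self hv (hpar.trans h)
  funext v
  by_contra hne
  have hiter : ∀ j, f (f^[j] v) ≠ g (f^[j] v) := fun j => by
    induction j with
    | zero => exact hne
    | succ j ih => rw [iterate_succ_apply']; exact step _ ih
  obtain ⟨k, hk⟩ := hf.2 v
  exact hiter k (by rw [hk, hf.1, hg.1])

end IsParentMap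

lemma SimpleGraph.Connected.exists_adj_dist_lt {G : SimpleGraph V} (hG : G.Connected)
    (hv : v ≠ z) : ∃ w, G.Adj v w ∧ G.dist w z < G.dist v z := by
  obtain ⟨p, hp⟩ := hG.exists_walk_length_eq_dist v z
  cases p with
  | nil => exact absurd rfl hv
  | cons hadj q => exact ⟨_, hadj, (dist_le q).trans_lt (by simp [← hp])⟩

lemma SimpleGraph.IsTree.exists_isParentMap_parentGraph_eq [Finite V] {G : SimpleGraph V}
    (hG : G.IsTree) (z : V) : ∃ f, IsParentMap f z ∧ parentGraph f = G := by
  classical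
  choose! par hadj hdist using fun v (hv : v ≠ z) => hG.connected.exists_adj_dist_lt hv
  set f := fun v => if v = z then z else par v
  have hdec : ∀ v ≠ z, G.dist (f v) z < G.dist v z := fun v hv => by simp [f, hv, hdist v hv]
  have hf : IsParentMap f z := ⟨if_pos rfl, exists_iterate_eq_of_forall_lt (G.dist · z) hdec⟩
  have hpar : ∀ v, v ≠ f v → G.Adj v (f v) := fun v hv => by
    have hvz : v ≠ z := by rintro rfl; exact hv hf.1.symm
    simpa [f, hvz] using hadj v hvz
  have hle : parentGraph f ≤ G := by
    intro v w hvw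
    obtain ⟨hne, rfl | rfl⟩ := parentGraph_adj.1 hvw
    exacts [hpar v hne, (hpar w hne.symm).symm]
  exact ⟨f, hf,
    (isTree_iff_maximal_isAcyclic.1 hf.parentGraph_isTree).2.eq_of_le hG.isAcyclic hle⟩

lemma card_isParentMap_eq_card_isTree [Finite V] (z : V) :
    Nat.card {f : V → V // IsParentMap f z} = Nat.card {G : SimpleGraph V // G.IsTree} := by
  refine Nat.card_eq_of_bijective (fun f => ⟨parentGraph f.1, f.2.parentGraph_isTree⟩)
    ⟨?_, ?_⟩
  · intro f g hfg
    exact Subtype.ext (f.2.eq_of_parentGraph_eq g.2 (congrArg Subtype.val hfg))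
  · intro G
    obtain ⟨f, hf, hfG⟩ := G.2.exists_isParentMap_parentGraph_eq z
    exact ⟨⟨f, hf⟩, Subtype.ext hfG⟩

def spanningTreeEquiv :
    {T : (⊤ : SimpleGraph V).Subgraph // IsSpanningTree T} ≃
      {G : SimpleGraph V // G.IsTree} where
  toFun T := ⟨T.1.spanningCoe, T.2.2⟩
  invFun G := ⟨toSubgraph G.1 le_top, toSubgraph.isSpanning _ le_top, G.2⟩
  left_inv T := Subtype.ext <| Subgraph.ext T.2.1.verts_eq_univ.symm rfl
  right_inv _ := rfl

end ParentGraph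

lemma card_list_length_eq_forall_mem {α : Type*} (t : Finset α) (m : ℕ) :
    Nat.card {l : List α // l.length = m ∧ ∀ x ∈ l, x ∈ t} = t.card ^ m := by
  calc Nat.card {l : List α // l.length = m ∧ ∀ x ∈ l, x ∈ t}
    _ = Nat.card (Fin m → t) := by
      refine (Nat.card_eq_of_bijective (fun g => ⟨List.ofFn fun i => (g i : α), by simp,
        by simp [List.mem_ofFn]⟩) ⟨fun g g' h => ?_, ?_⟩).symm
      · have := List.ofFn_injective (Subtype.ext_iff.1 h)
        exact funext fun i => Subtype.ext (congrFun this i)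
      · rintro ⟨l, rfl, hl⟩
        exact ⟨fun i => ⟨l.get i, hl _ (l.get_mem i)⟩, Subtype.ext (List.ofFn_get l)⟩
    _ = t.card ^ m := by simp

section ParentMapOn

variable {α : Type*} [DecidableEq α] {s : Finset α} {r ℓ a : α} {f : α → α} {l : List α}

/-- The parent map of a tree on `insert r s` rooted at `r`, sending every vertex outside `s`
to `r` so that it is determined by its values on `s`. -/
def IsParentMapOn (s : Finset α) (r : α) (f : α → α) : Prop :=
  (∀ v ∈ s, f v ∈ insert r s) ∧ (∀ v ∉ s, f v = r) ∧ ∀ v, ∃ k, f^[k] v = r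

def leaves (s : Finset α) (f : α → α) : Finset α := s \ s.image f

def IsPruferSeq (s : Finset α) (r : α) (l : List α) : Prop :=
  l.length = s.card - 1 ∧ ∀ x ∈ l, x ∈ insert r s

lemma isParentMapOn_univ_erase_iff [Fintype α] :
    IsParentMapOn (univ.erase r) r f ↔ IsParentMap f r :=
  ⟨fun hf => ⟨hf.2.1 r (notMem_erase r univ), hf.2.2⟩,
    fun hf => ⟨fun _ _ => by simp, fun v hv => by rw [show v = r by simpa using hv, hf.1],
      hf.2⟩⟩

lemma sdiff_toFinset_nonempty_of_length_lt (h : l.length < s.card) :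
    (s \ l.toFinset).Nonempty := by
  rw [sdiff_nonempty]
  intro hsub
  exact (card_le_card hsub).trans l.toFinset_card_le |>.not_gt h

lemma mem_insert_erase_of_ne {x : α} (hx : x ∈ insert r s) (hxℓ : x ≠ ℓ) :
    x ∈ insert r (s.erase ℓ) := by
  rw [mem_insert, mem_erase] at *
  tauto

namespace IsParentMapOn

lemma isParentMap (hf : IsParentMapOn s r f) (hr : r ∉ s) : IsParentMap f r :=
  ⟨hf.2.1 r hr, hf.2.2⟩

lemma apply_mem (hf : IsParentMapOn s r f) (v : α) : f v ∈ insert r s := by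
  by_cases hv : v ∈ s
  · exact hf.1 v hv
  · rw [hf.2.1 v hv]; exact mem_insert_self r s

lemma eq_const_of_card_le_one (hf : IsParentMapOn s r f) (hr : r ∉ s) (hs : s.card ≤ 1) :
    f = fun _ => r := by
  funext v
  by_cases hv : v ∈ s
  · refine (mem_insert.1 (hf.1 v hv)).resolve_right fun hfv => ?_
    exact (hf.isParentMap hr).apply_ne_self (ne_of_mem_of_not_mem hv hr)
      (card_le_one.1 hs _ hfv _ hv)
  · exact hf.2.1 v hv

lemma leaves_nonempty (hf : IsParentMapOn s r f) (hr : r ∉ s) (hs : s.Nonempty) :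
    (leaves s f).Nonempty := by
  -- otherwise `f` maps `s` onto itself, and no vertex of `s` could ever reach `r`
  rw [leaves, sdiff_nonempty]
  intro hsub
  have himage : s.image f = s := (eq_of_subset_of_card_le hsub card_image_le).symm
  have hmaps : Set.MapsTo f s s := fun v hv => himage ▸ mem_image_of_mem f hv
  obtain ⟨v, hv⟩ := hs
  obtain ⟨k, hk⟩ := hf.2.2 v
  exact hr (hk ▸ hmaps.iterate k hv)

lemma card_le_one_of_not_two_le_card_and_nonempty (hf : IsParentMapOn s r f) (hr : r ∉ s)
    (h : ¬(2 ≤ s.card ∧ (leaves s f).Nonempty)) : s.card ≤ 1 := by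
  by_contra! hs
  exact h ⟨hs, hf.leaves_nonempty hr (card_pos.1 (by omega))⟩

lemma notMem_range_of_mem_leaves (hf : IsParentMapOn s r f) (hr : r ∉ s)
    (hℓ : ℓ ∈ leaves s f) : ℓ ∉ Set.range f := by
  rintro ⟨v, rfl⟩
  obtain ⟨hfv, hfv'⟩ := mem_sdiff.1 hℓ
  by_cases hv : v ∈ s
  · exact hfv' (mem_image_of_mem f hv)
  · exact hr (hf.2.1 v hv ▸ hfv)

lemma erase_leaf (hf : IsParentMapOn s r f) (hr : r ∉ s) (hℓ : ℓ ∈ leaves s f) :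
    IsParentMapOn (s.erase ℓ) r (update f ℓ r) := by
  have hℓs := (mem_sdiff.1 hℓ).1
  have hrange := hf.notMem_range_of_mem_leaves hr hℓ
  refine ⟨fun v hv => ?_, fun v hv => ?_, fun v => ?_⟩
  · rw [update_of_ne (ne_of_mem_erase hv),
      ← erase_insert_of_ne (ne_of_mem_of_not_mem hℓs hr).symm]
    exact mem_erase.2 ⟨fun h => hrange ⟨v, h⟩, hf.1 v (mem_of_mem_erase hv)⟩
  · by_cases hvℓ : v = ℓ
    · rw [hvℓ, update_self]
    · rw [update_of_ne hvℓ]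
      exact hf.2.1 v fun h => hv (mem_erase.2 ⟨hvℓ, h⟩)
  · by_cases hvℓ : v = ℓ
    · exact ⟨1, by simp [hvℓ]⟩
    · obtain ⟨k, hk⟩ := hf.2.2 v
      exact ⟨k, (iterate_update_of_notMem_range hrange hvℓ r k).trans hk⟩

lemma insert_leaf (hf : IsParentMapOn s r f) (hℓ : ℓ ∉ insert r s) (ha : a ∈ insert r s) :
    IsParentMapOn (insert ℓ s) r (update f ℓ a) := by
  have hrange : ℓ ∉ Set.range f := fun ⟨v, hv⟩ => hℓ (hv ▸ hf.apply_mem v)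
  have hsub : insert r s ⊆ insert r (insert ℓ s) := insert_subset_insert r (subset_insert ℓ s)
  have hreach : ∀ v ≠ ℓ, ∃ k, (update f ℓ a)^[k] v = r := fun v hv => by
    obtain ⟨k, hk⟩ := hf.2.2 v
    exact ⟨k, (iterate_update_of_notMem_range hrange hv a k).trans hk⟩
  refine ⟨fun v hv => ?_, fun v hv => ?_, fun v => ?_⟩
  · by_cases hvℓ : v = ℓ
    · rw [hvℓ, update_self]; exact hsub ha
    · rw [update_of_ne hvℓ]; exact hsub (hf.apply_mem v)
  · rw [mem_insert, not_or] at hv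
    rw [update_of_ne hv.1]
    exact hf.2.1 v hv.2
  · by_cases hvℓ : v = ℓ
    · obtain ⟨k, hk⟩ := hreach a fun h => hℓ (h ▸ ha)
      exact ⟨k + 1, by rwa [iterate_succ_apply, hvℓ, update_self]⟩
    · exact hreach v hvℓ

end IsParentMapOn

namespace IsPruferSeq

lemma card_eq (hl : IsPruferSeq s r (a :: l)) : s.card = l.length + 2 := by
  have := hl.1
  rw [List.length_cons] at this
  omega

lemma sdiff_nonempty (hl : IsPruferSeq s r (a :: l)) : (s \ (a :: l).toFinset).Nonempty :=
  sdiff_toFinset_nonempty_of_length_lt (by rw [hl.card_eq, List.length_cons]; omega)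

lemma erase (hl : IsPruferSeq s r (a :: l)) (hℓs : ℓ ∈ s) (hℓl : ℓ ∉ a :: l) :
    IsPruferSeq (s.erase ℓ) r l ∧ a ∈ insert r (s.erase ℓ) := by
  have hmem : ∀ x ∈ a :: l, x ∈ insert r (s.erase ℓ) := fun x hx =>
    mem_insert_erase_of_ne (hl.2 x hx) (ne_of_mem_of_not_mem hx hℓl)
  refine ⟨⟨?_, fun x hx => hmem x (List.mem_cons_of_mem a hx)⟩, hmem a List.mem_cons_self⟩
  rw [card_erase_of_mem hℓs, hl.card_eq]
  rfl

end IsPruferSeq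

lemma card_isPruferSeq (hr : r ∉ s) :
    Nat.card {l // IsPruferSeq s r l} = (s.card + 1) ^ (s.card - 1) := by
  rw [← card_insert_of_notMem hr]
  exact card_list_length_eq_forall_mem _ _

end ParentMapOn

section Prufer

variable {α : Type*} [LinearOrder α] {s : Finset α} {r : α} {f : α → α} {l : List α}

def pruferCode (r : α) (f : α → α) (s : Finset α) : List α :=
  if h : 2 ≤ s.card ∧ (leaves s f).Nonempty then
    f ((leaves s f).min' h.2) ::
      pruferCode r (update f ((leaves s f).min' h.2) r) (s.erase ((leaves s f).min' h.2))
  else []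
termination_by s.card
decreasing_by exact card_erase_lt_of_mem (mem_sdiff.1 (min'_mem _ h.2)).1

/-- The leaf deleted along with the first entry `a` is the least vertex of `s` that does not
occur in `a :: l`. -/
def pruferDecode (r : α) : List α → Finset α → α → α
  | [], _ => fun _ => r
  | a :: l, s =>
    if h : (s \ (a :: l).toFinset).Nonempty then
      update (pruferDecode r l (s.erase ((s \ (a :: l).toFinset).min' h)))
        ((s \ (a :: l).toFinset).min' h) a
    else fun _ => r

lemma mem_pruferCode_iff (hf : IsParentMapOn s r f) (hr : r ∉ s) {x : α} (hx : x ≠ r) :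
    x ∈ pruferCode r f s ↔ x ∈ s.image f := by
  fun_induction pruferCode r f s with
  | case1 f s h ih =>
    set ℓ := (leaves s f).min' h.2
    have hℓ : ℓ ∈ s := (mem_sdiff.1 (min'_mem _ h.2)).1
    rw [List.mem_cons, ih (hf.erase_leaf hr (min'_mem _ h.2)) (mt mem_of_mem_erase hr),
      image_congr fun v hv => update_of_ne (ne_of_mem_erase hv) _ _, ← insert_erase hℓ,
      image_insert, erase_insert (notMem_erase ℓ s), mem_insert]
  | case2 f s h =>
    rw [hf.eq_const_of_card_le_one hr (hf.card_le_one_of_not_two_le_card_and_nonempty hr h)]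
    simp [hx.symm]

lemma sdiff_pruferCode (hf : IsParentMapOn s r f) (hr : r ∉ s) :
    s \ (pruferCode r f s).toFinset = leaves s f := by
  ext x
  simp only [leaves, mem_sdiff, List.mem_toFinset, and_congr_right_iff]
  exact fun hx => not_congr (mem_pruferCode_iff hf hr (ne_of_mem_of_not_mem hx hr))

lemma isPruferSeq_pruferCode (hf : IsParentMapOn s r f) (hr : r ∉ s) :
    IsPruferSeq s r (pruferCode r f s) := by
  fun_induction pruferCode r f s with
  | case1 f s h ih =>
    have hℓ := min'_mem _ h.2
    obtain ⟨hlen, hmem⟩ := ih (hf.erase_leaf hr hℓ) (mt mem_of_mem_erase hr)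
    refine ⟨?_, fun x hx => ?_⟩
    · rw [List.length_cons, hlen, card_erase_of_mem (mem_sdiff.1 hℓ).1]
      omega
    · rcases List.mem_cons.1 hx with rfl | hx
      · exact hf.apply_mem _
      · exact insert_subset_insert r (erase_subset _ s) (hmem x hx)
  | case2 f s h =>
    have := hf.card_le_one_of_not_two_le_card_and_nonempty hr h
    exact ⟨by rw [List.length_nil]; omega, by simp⟩

lemma pruferDecode_pruferCode (hf : IsParentMapOn s r f) (hr : r ∉ s) :
    pruferDecode r (pruferCode r f s) s = f := by
  fun_induction pruferCode r f s with
  | case1 f s h ih =>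
    set ℓ := (leaves s f).min' h.2
    set l := pruferCode r (update f ℓ r) (s.erase ℓ)
    have hsd : s \ (f ℓ :: l).toFinset = leaves s f := by
      have hcode : pruferCode r f s = f ℓ :: l := by rw [pruferCode, dif_pos h]
      exact hcode ▸ sdiff_pruferCode hf hr
    have hmin : (s \ (f ℓ :: l).toFinset).min' (hsd ▸ h.2) = ℓ := by simp only [hsd, ℓ]
    rw [pruferDecode, dif_pos (hsd ▸ h.2), hmin,
      ih (hf.erase_leaf hr (min'_mem _ h.2)) (mt mem_of_mem_erase hr), update_idem,
      update_eq_self]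
  | case2 f s h =>
    exact (hf.eq_const_of_card_le_one hr
      (hf.card_le_one_of_not_two_le_card_and_nonempty hr h)).symm

lemma isParentMapOn_pruferDecode (hr : r ∉ s) (hl : IsPruferSeq s r l) :
    IsParentMapOn s r (pruferDecode r l s) := by
  fun_induction pruferDecode r l s with
  | case1 s => exact ⟨fun _ _ => mem_insert_self r s, fun _ _ => rfl, fun _ => ⟨1, rfl⟩⟩
  | case2 a l s h ih =>
    obtain ⟨hℓs, hℓl⟩ := mem_sdiff.1 (min'_mem _ h)
    set ℓ := (s \ (a :: l).toFinset).min' h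
    rw [List.mem_toFinset] at hℓl
    obtain ⟨hl', ha⟩ := hl.erase hℓs hℓl
    have hf := ih (mt mem_of_mem_erase hr) hl'
    have hℓ : ℓ ∉ insert r (s.erase ℓ) := by simp [ne_of_mem_of_not_mem hℓs hr]
    simpa only [insert_erase hℓs] using hf.insert_leaf hℓ ha
  | case3 a l s h => exact absurd hl.sdiff_nonempty h

lemma pruferCode_pruferDecode (hr : r ∉ s) (hl : IsPruferSeq s r l) :
    pruferCode r (pruferDecode r l s) s = l := by
  fun_induction pruferDecode r l s with
  | case1 s =>
    have := hl.1
    rw [List.length_nil] at this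
    rw [pruferCode, dif_neg (by omega)]
  | case2 a l s h ih =>
    obtain ⟨hℓs, hℓl⟩ := mem_sdiff.1 (min'_mem _ h)
    set ℓ := (s \ (a :: l).toFinset).min' h
    rw [List.mem_toFinset] at hℓl
    have hr' : r ∉ s.erase ℓ := mt mem_of_mem_erase hr
    have hl' := (hl.erase hℓs hℓl).1
    set g := pruferDecode r l (s.erase ℓ)
    have hg : IsParentMapOn (s.erase ℓ) r g := isParentMapOn_pruferDecode hr' hl'
    have hleaves : leaves s (update g ℓ a) = s \ (a :: l).toFinset := by
      ext x
      simp only [leaves, mem_sdiff, List.mem_toFinset, and_congr_right_iff]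
      intro hx
      rw [← insert_erase hℓs, image_insert, update_self,
        image_congr fun v hv => update_of_ne (ne_of_mem_erase hv) _ _, mem_insert,
        ← mem_pruferCode_iff hg hr' (ne_of_mem_of_not_mem hx hr), ih hr' hl', List.mem_cons]
    have hmin : (leaves s (update g ℓ a)).min' (hleaves ▸ h) = ℓ := by
      simp only [hleaves, ℓ]
    have hcard : 2 ≤ s.card := by rw [hl.card_eq]; omega
    have hupd : update g ℓ r = g := by rw [← hg.2.1 ℓ (notMem_erase ℓ s), update_eq_self]
    rw [pruferCode, dif_pos ⟨hcard, hleaves ▸ h⟩, hmin, update_self, update_idem, hupd,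
      ih hr' hl']
  | case3 a l s h => exact absurd hl.sdiff_nonempty h

def pruferEquiv (hr : r ∉ s) : {f // IsParentMapOn s r f} ≃ {l // IsPruferSeq s r l} where
  toFun f := ⟨pruferCode r f s, isPruferSeq_pruferCode f.2 hr⟩
  invFun l := ⟨pruferDecode r l s, isParentMapOn_pruferDecode hr l.2⟩
  left_inv f := Subtype.ext (pruferDecode_pruferCode f.2 hr)
  right_inv l := Subtype.ext (pruferCode_pruferDecode hr l.2)

theorem card_isParentMapOn (hr : r ∉ s) :
    Nat.card {f // IsParentMapOn s r f} = (s.card + 1) ^ (s.card - 1) := by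
  rw [Nat.card_congr (pruferEquiv hr), card_isPruferSeq hr]

end Prufer

/-- Cayley's formula: the complete graph on `p ≥ 1` labeled vertices has
`p ^ (p - 2)` spanning trees. -/
theorem cayley_formula (p : ℕ) (hp : 1 ≤ p) :
    Nat.card {T : (⊤ : SimpleGraph (Fin p)).Subgraph // IsSpanningTree T} =
      p ^ (p - 2) := by
  set z : Fin p := ⟨0, hp⟩
  calc Nat.card {T : (⊤ : SimpleGraph (Fin p)).Subgraph // IsSpanningTree T}
      = Nat.card {G : SimpleGraph (Fin p) // G.IsTree} := Nat.card_congr spanningTreeEquiv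
    _ = Nat.card {f : Fin p → Fin p // IsParentMap f z} :=
      (card_isParentMap_eq_card_isTree z).symm
    _ = Nat.card {f : Fin p → Fin p // IsParentMapOn (univ.erase z) z f} := by
      simp_rw [isParentMapOn_univ_erase_iff]
    _ = p ^ (p - 2) := by
      rw [card_isParentMapOn (notMem_erase z univ), card_erase_of_mem (mem_univ z), card_univ,
        Fintype.card_fin, Nat.sub_add_cancel hp, Nat.sub_sub]
end

section
/- For a finite connected weighted graph in which exactly q edges share a common weight (all other weights being distinct), the number of distinct minimum spanning trees is at most q!. -/
/-- Total weight of the edges of a subgraph of a finite graph. -/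
noncomputable def subgraphWeight {V : Type*} [Fintype V] {G : SimpleGraph V}
    (w : Sym2 V → ℝ) (T : G.Subgraph) : ℝ :=
  ∑ e ∈ (Set.toFinite T.edgeSet).toFinset, w e

/-- `T` is a minimum spanning tree of `G` with respect to the weights `w`. -/
def IsMST {V : Type*} [Fintype V] {G : SimpleGraph V} (w : Sym2 V → ℝ)
    (T : G.Subgraph) : Prop :=
  IsSpanningTree T ∧ ∀ T' : G.Subgraph, IsSpanningTree T' →
    subgraphWeight w T ≤ subgraphWeight w T'

open SimpleGraph

lemma Nat.choose_le_factorial (n k : ℕ) : n.choose k ≤ n.factorial := by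
  rcases le_or_gt k n with hk | hk
  · rw [← Nat.choose_mul_factorial_mul_factorial hk, mul_assoc]
    exact Nat.le_mul_of_pos_right _ (by positivity)
  · simp [Nat.choose_eq_zero_of_lt hk]

namespace SimpleGraph

variable {V : Type*} {G : SimpleGraph V}

lemma Subgraph.IsSpanning.eq_of_edgeSet_eq {T T' : G.Subgraph} (hT : T.IsSpanning)
    (hT' : T'.IsSpanning) (h : T.edgeSet = T'.edgeSet) : T = T' := by
  refine Subgraph.ext (hT.verts_eq_univ.trans hT'.verts_eq_univ.symm) ?_
  rw [← Subgraph.spanningCoe_inj, ← edgeSet_inj, edgeSet_spanningCoe, edgeSet_spanningCoe, h]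

lemma Reachable.deleteEdges_or {v x : V} (h : G.Reachable v x) (y : V) :
    (G.deleteEdges {s(x, y)}).Reachable v x ∨ (G.deleteEdges {s(x, y)}).Reachable v y := by
  obtain ⟨p⟩ := h
  induction p with
  | nil => exact Or.inl .rfl
  | @cons u u' z huu' p ih =>
    by_cases he : s(u, u') = s(z, y)
    · rcases Sym2.eq_iff.mp he with ⟨rfl, -⟩ | ⟨rfl, -⟩
      exacts [Or.inl .rfl, Or.inr .rfl]
    · have hadj : (G.deleteEdges {s(z, y)}).Adj u u' := by simp [huu', he]
      exact ih.imp hadj.reachable.trans hadj.reachable.trans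

lemma Walk.IsTrail.exists_adj_crossing (P : V → Prop) {x y : V} {p : G.Walk x y}
    (hp : p.IsTrail) (hx : P x) (hy : ¬ P y) :
    ∃ a b, G.Adj a b ∧ P a ∧ ¬ P b ∧
      (G.deleteEdges {s(a, b)}).Reachable x a ∧ (G.deleteEdges {s(a, b)}).Reachable b y := by
  induction p with
  | nil => exact absurd hx hy
  | @cons u v _ huv p ih =>
    rw [Walk.isTrail_cons] at hp
    by_cases hv : P v
    · obtain ⟨a, b, hab, ha, hb, hva, hby⟩ := ih hp.1 hv hy
      have hne : s(u, v) ≠ s(a, b) := by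
        rintro h
        rcases Sym2.eq_iff.mp h with ⟨rfl, rfl⟩ | ⟨rfl, rfl⟩
        exacts [hb hv, hb hx]
      have hadj : (G.deleteEdges {s(a, b)}).Adj u v := by simp [huv, hne]
      exact ⟨a, b, hab, ha, hb, hadj.reachable.trans hva, hby⟩
    · exact ⟨u, v, huv, hx, hv, .rfl, (p.toDeleteEdge _ hp.2).reachable⟩

lemma IsTree.isTree_deleteEdges_sup_edge {S : SimpleGraph V} (hS : S.IsTree) {x y a b : V}
    (hxy : S.Adj x y) (hxa : (S.deleteEdges {s(x, y)}).Reachable x a)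
    (hby : (S.deleteEdges {s(x, y)}).Reachable b y) :
    (S.deleteEdges {s(x, y)} ⊔ edge a b).IsTree := by
  set H := S.deleteEdges {s(x, y)}
  have hxy' : ¬ H.Reachable x y :=
    isBridge_iff.mp (isAcyclic_iff_forall_adj_isBridge.mp hS.isAcyclic hxy)
  have hab : ¬ H.Reachable a b := fun h ↦ hxy' (hxa.trans (h.trans hby))
  have hxy'' : (H ⊔ edge a b).Reachable x y := by
    have hne : a ≠ b := by rintro rfl; exact hab .rfl
    have hadj : (edge a b).Adj a b := by simp [edge_adj, hne]
    exact (hxa.mono le_sup_left).trans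
      ((hadj.reachable.mono le_sup_right).trans (hby.mono le_sup_left))
  refine ⟨(connected_iff_exists_forall_reachable _).2 ⟨x, fun v ↦ ?_⟩,
    (hS.isAcyclic.anti (deleteEdges_le _)).sup_edge_of_not_reachable hab⟩
  rcases (hS.connected.preconnected v x).deleteEdges_or y with h | h
  exacts [(h.mono le_sup_left).symm, hxy''.trans (h.mono le_sup_left).symm]

lemma IsTree.exists_exchange {S S' : SimpleGraph V} (hS : S.IsTree) (hS' : S'.IsTree)
    {x y : V} (hxy : S.Adj x y) (hxy' : ¬ S'.Adj x y) :
    ∃ a b, S'.Adj a b ∧ ¬ S.Adj a b ∧ (S.deleteEdges {s(x, y)} ⊔ edge a b).IsTree ∧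
      (S'.deleteEdges {s(a, b)} ⊔ edge x y).IsTree := by
  set H := S.deleteEdges {s(x, y)}
  have hbr : ¬ H.Reachable x y :=
    isBridge_iff.mp (isAcyclic_iff_forall_adj_isBridge.mp hS.isAcyclic hxy)
  obtain ⟨p, hp⟩ := hS'.connected.preconnected.exists_isPath x y
  obtain ⟨a, b, hab, ha, hb, hxa, hby⟩ :=
    hp.isTrail.exists_adj_crossing (H.Reachable x) .rfl hbr
  have hby' : H.Reachable b y :=
    ((hS.connected.preconnected b x).deleteEdges_or y).resolve_left fun h ↦ hb h.symm
  refine ⟨a, b, hab, fun hab' ↦ ?_, hS.isTree_deleteEdges_sup_edge hxy ha hby',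
    hS'.isTree_deleteEdges_sup_edge hab hxa.symm hby.symm⟩
  by_cases he : s(a, b) = s(x, y)
  · rcases Sym2.eq_iff.mp he with ⟨rfl, rfl⟩ | ⟨rfl, rfl⟩
    exacts [hxy' hab, hxy' hab.symm]
  · exact hb (ha.trans (Adj.reachable (by simp [H, hab', he])))

end SimpleGraph

section MST

variable {V : Type*} [Fintype V] {G : SimpleGraph V} {w : Sym2 V → ℝ}

lemma IsSpanningTree.ncard_edgeSet {T : G.Subgraph} (hT : IsSpanningTree T) :
    T.edgeSet.ncard + 1 = Fintype.card V := by
  rw [← Subgraph.edgeSet_spanningCoe, ← Nat.card_coe_set_eq, ← Nat.card_eq_fintype_card]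
  exact (isTree_iff_connected_and_card.mp hT.2).2

lemma IsSpanningTree.ncard_inter_eq_of_sdiff_eq {T T' : G.Subgraph} (hT : IsSpanningTree T)
    (hT' : IsSpanningTree T') {D : Set (Sym2 V)} (h : T.edgeSet \ D = T'.edgeSet \ D) :
    (T.edgeSet ∩ D).ncard = (T'.edgeSet ∩ D).ncard := by
  have hsplit := Set.ncard_inter_add_ncard_sdiff_eq_ncard T.edgeSet D (Set.toFinite _)
  have hsplit' := Set.ncard_inter_add_ncard_sdiff_eq_ncard T'.edgeSet D (Set.toFinite _)
  have := hT.ncard_edgeSet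
  have := hT'.ncard_edgeSet
  rw [h] at hsplit
  omega

lemma subgraphWeight_add_of_edgeSet_eq_insert {T T₂ : G.Subgraph} {e f : Sym2 V}
    (he : e ∈ T.edgeSet) (hf : f ∉ T.edgeSet) (h : T₂.edgeSet = insert f (T.edgeSet \ {e})) :
    subgraphWeight w T₂ + w e = subgraphWeight w T + w f := by
  classical
  have hfin : (Set.toFinite T₂.edgeSet).toFinset =
      insert f ((Set.toFinite T.edgeSet).toFinset.erase e) := by
    ext g
    simp [h, and_comm]
  rw [subgraphWeight, subgraphWeight, hfin, Finset.sum_insert (by simp [hf]),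
    ← Finset.sum_erase_add _ _ (by simpa using he : e ∈ (Set.toFinite T.edgeSet).toFinset)]
  ring

lemma IsMST.weight_le_of_isTree_exchange {T : G.Subgraph} (hT : IsMST w T) {x y a b : V}
    (hxy : T.Adj x y) (hab : G.Adj a b) (hab' : ¬ T.Adj a b)
    (htree : (T.spanningCoe.deleteEdges {s(x, y)} ⊔ edge a b).IsTree) :
    w s(x, y) ≤ w s(a, b) := by
  have hle : T.spanningCoe.deleteEdges {s(x, y)} ⊔ edge a b ≤ G :=
    sup_le ((deleteEdges_le _).trans T.spanningCoe_le) ((edge_le_iff _).2 (Or.inr hab))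
  set T₂ := toSubgraph (T.spanningCoe.deleteEdges {s(x, y)} ⊔ edge a b) hle
  have hT₂ : T₂.edgeSet = insert s(a, b) (T.edgeSet \ {s(x, y)}) := by
    have hcoe : T₂.spanningCoe = T.spanningCoe.deleteEdges {s(x, y)} ⊔ edge a b := rfl
    rw [← Subgraph.edgeSet_spanningCoe T₂, hcoe, edgeSet_sup, edgeSet_deleteEdges,
      Subgraph.edgeSet_spanningCoe, edgeSet_edge_of_ne hab.ne, Set.union_singleton]
  have hswap := subgraphWeight_add_of_edgeSet_eq_insert (w := w) hxy hab' hT₂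
  have hmin := hT.2 T₂ ⟨toSubgraph.isSpanning _ hle, htree⟩
  linarith

lemma IsMST.exists_adj_weight_eq {T T' : G.Subgraph} (hT : IsMST w T) (hT' : IsMST w T')
    {x y : V} (hxy : T.Adj x y) (hxy' : ¬ T'.Adj x y) :
    ∃ a b, T'.Adj a b ∧ ¬ T.Adj a b ∧ w s(a, b) = w s(x, y) := by
  obtain ⟨a, b, hab', hab, htree, htree'⟩ := hT.1.2.exists_exchange hT'.1.2 hxy hxy'
  exact ⟨a, b, hab', hab,
    le_antisymm (hT'.weight_le_of_isTree_exchange hab' (T.adj_sub hxy) hxy' htree')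
      (hT.weight_le_of_isTree_exchange hxy (T'.adj_sub hab') hab htree)⟩

lemma IsMST.mem_edgeSet_of_weight_unique {T T' : G.Subgraph} (hT : IsMST w T)
    (hT' : IsMST w T') {e : Sym2 V} (he : e ∈ T.edgeSet)
    (hu : ∀ f ∈ G.edgeSet, w f = w e → f = e) : e ∈ T'.edgeSet := by
  induction e using Sym2.ind with
  | _ x y =>
  by_contra he'
  obtain ⟨a, b, hab', hab, hw⟩ := hT.exists_adj_weight_eq hT' he he'
  have hba : s(a, b) = s(x, y) := hu _ (T'.edgeSet_subset hab') hw
  rw [← Subgraph.mem_edgeSet, hba] at hab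
  exact hab he

lemma ncard_le_choose_of_edgeSet_sdiff_eq {S : Set G.Subgraph}
    (hS : ∀ T ∈ S, IsSpanningTree T) {D : Set (Sym2 V)}
    (hD : ∀ T ∈ S, ∀ T' ∈ S, T.edgeSet \ D = T'.edgeSet \ D) :
    ∃ k, S.ncard ≤ D.ncard.choose k := by
  classical
  rcases S.eq_empty_or_nonempty with rfl | ⟨T₀, hT₀⟩
  · exact ⟨0, by simp⟩
  refine ⟨(T₀.edgeSet ∩ D).ncard, ?_⟩
  rw [← Set.ncard_powerset_ncard (Set.toFinite D)]
  refine Set.ncard_le_ncard_of_injOn (fun T ↦ T.edgeSet ∩ D) ?_ ?_ (Set.toFinite _)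
  · exact fun T hT ↦ ⟨Set.inter_subset_right,
      (hS T hT).ncard_inter_eq_of_sdiff_eq (hS T₀ hT₀) (hD T hT T₀ hT₀)⟩
  · intro T hT T' hT' h
    refine (hS T hT).1.eq_of_edgeSet_eq (hS T' hT').1 ?_
    rw [← Set.inter_union_sdiff T.edgeSet D, ← Set.inter_union_sdiff T'.edgeSet D,
      hD T hT T' hT']
    exact congrArg (· ∪ _) h

end MST

theorem card_mst_le_factorial_of_q_equal_weights_general
    {V : Type*} [Fintype V] (G : SimpleGraph V)
    (w : Sym2 V → ℝ) (c : ℝ) (q : ℕ)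
    (hq : Nat.card {e : Sym2 V // e ∈ G.edgeSet ∧ w e = c} = q)
    (hw : ∀ e ∈ G.edgeSet, ∀ f ∈ G.edgeSet,
      w e ≠ c → w f ≠ c → w e = w f → e = f) :
    Nat.card {T : G.Subgraph // IsMST w T} ≤ Nat.factorial q := by
  set D : Set (Sym2 V) := {e | e ∈ G.edgeSet ∧ w e = c}
  have hagree : ∀ T T' : G.Subgraph, IsMST w T → IsMST w T' →
      T.edgeSet \ D ⊆ T'.edgeSet \ D := by
    rintro T T' hT hT' e ⟨he, heD⟩
    have hec : w e ≠ c := fun h ↦ heD ⟨T.edgeSet_subset he, h⟩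
    refine ⟨hT.mem_edgeSet_of_weight_unique hT' he fun f hf hfe ↦ ?_, heD⟩
    exact hw f hf e (T.edgeSet_subset he) (hfe ▸ hec) hec hfe
  obtain ⟨k, hk⟩ := ncard_le_choose_of_edgeSet_sdiff_eq (S := {T | IsMST w T}) (D := D)
    (fun T hT ↦ hT.1) fun T hT T' hT' ↦ (hagree T T' hT hT').antisymm (hagree T' T hT' hT)
  calc Nat.card {T : G.Subgraph // IsMST w T} = {T : G.Subgraph | IsMST w T}.ncard :=
        Nat.card_coe_set_eq _
    _ ≤ D.ncard.choose k := hk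
    _ = q.choose k := by rw [← hq]; rfl
    _ ≤ q.factorial := Nat.choose_le_factorial _ _

/-- If exactly `q` edges of a connected weighted graph share a common weight `c`
and all other edge weights are pairwise distinct (and different from `c`),
then there are at most `q!` minimum spanning trees. -/
theorem card_mst_le_factorial_of_q_equal_weights
    {V : Type*} [Fintype V] (G : SimpleGraph V) (hG : G.Connected)
    (w : Sym2 V → ℝ) (c : ℝ) (q : ℕ)
    (hq : Nat.card {e : Sym2 V // e ∈ G.edgeSet ∧ w e = c} = q)
    (hw : ∀ e ∈ G.edgeSet, ∀ f ∈ G.edgeSet,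
      w e ≠ c → w f ≠ c → w e = w f → e = f) :
    Nat.card {T : G.Subgraph // IsMST w T} ≤ Nat.factorial q :=
  card_mst_le_factorial_of_q_equal_weights_general G w c q hq hw
end
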